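/- arXiv:2012.14009 — 4 statements merged into one kernel-verified Lean document; each statement's English description precedes it below -/
import Mathlib

section
/- A digital line segment in ℤ² (a c₂-connected set of collinear points, with at least 2 points) must be vertical, horizontal, or have slope ±1. -/
/-- c₁ (4-)adjacency on ℤ²: ℓ₁ distance 1. -/
def c1Adj (p q : ℤ × ℤ) : Prop := |p.1 - q.1| + |p.2 - q.2| = 1

/-- c₂ (8-)adjacency on ℤ²: distinct with ℓ∞ distance ≤ 1. -/
def c2Adj (p q : ℤ × ℤ) : Prop := p ≠ q ∧ |p.1 - q.1| ≤ 1 ∧ |p.2 - q.2| ≤ 1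

/-- Connectivity of a subset of ℤ² w.r.t. an adjacency relation. -/
def ConnIn (adj : ℤ × ℤ → ℤ × ℤ → Prop) (A : Set (ℤ × ℤ)) : Prop :=
  ∀ a ∈ A, ∀ b ∈ A, Relation.ReflTransGen (fun x y => x ∈ A ∧ y ∈ A ∧ adj x y) a b

/-- Reachability within a set `W` via an adjacency relation. -/
def Reach (adj : ℤ × ℤ → ℤ × ℤ → Prop) (W : Set (ℤ × ℤ)) (x y : ℤ × ℤ) : Prop :=
  Relation.ReflTransGen (fun u v => u ∈ W ∧ v ∈ W ∧ adj u v) x y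

/-- (c₂,c₂)-continuity of a self-map on a subset of ℤ². -/
def DigContOn (X : Set (ℤ × ℤ)) (f : ℤ × ℤ → ℤ × ℤ) : Prop :=
  ∀ p ∈ X, ∀ q ∈ X, c2Adj p q → f p = f q ∨ c2Adj (f p) (f q)

/-- (X, c₂) has the approximate fixed point property. -/
def AFPPOn (X : Set (ℤ × ℤ)) : Prop :=
  ∀ f : ℤ × ℤ → ℤ × ℤ, (∀ p ∈ X, f p ∈ X) → DigContOn X f →
    ∃ p ∈ X, f p = p ∨ c2Adj p (f p)

/-- S is a c₂-simple closed curve (of at least 4 points). -/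
def SCC (S : Set (ℤ × ℤ)) : Prop :=
  ∃ m : ℕ, 4 ≤ m ∧ ∃ s : ZMod m → ℤ × ℤ, Function.Injective s ∧ Set.range s = S ∧
    (∀ i, c2Adj (s i) (s (i + 1))) ∧ (∀ i j, c2Adj (s i) (s j) → j = i + 1 ∨ j = i - 1)

/-- The interior of S: the finite c₁-component(s) side of ℤ² \ S;
a point is interior iff its c₁-reachable set inside the complement of S is finite. -/
def DigInterior (S : Set (ℤ × ℤ)) : Set (ℤ × ℤ) :=
  {x | x ∉ S ∧ Set.Finite {y | Reach c1Adj Sᶜ x y}}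

/-- S is a bounding curve of the digital disk X. -/
def BoundingCurve (S X : Set (ℤ × ℤ)) : Prop := SCC S ∧ X = S ∪ DigInterior S

/-- Embedding of ℤ² into ℝ². -/
def emb (p : ℤ × ℤ) : ℝ × ℝ := ((p.1 : ℝ), (p.2 : ℝ))

/-- A digital line segment: a c₂-connected collinear set with at least 2 points. -/
def DigSegment (L : Set (ℤ × ℤ)) : Prop :=
  2 ≤ L.ncard ∧ ConnIn c2Adj L ∧ Collinear ℝ (emb '' L)

/-- p is an endpoint of the digital segment L. -/
def Endpoint (L : Set (ℤ × ℤ)) (p : ℤ × ℤ) : Prop :=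
  p ∈ L ∧ emb p ∉ convexHull ℝ (emb '' (L \ {p}))

/-- L is a maximal digital line segment contained in S. -/
def MaxSegOf (S L : Set (ℤ × ℤ)) : Prop :=
  L ⊆ S ∧ DigSegment L ∧ ∀ L', L ⊆ L' → L' ⊆ S → DigSegment L' → L' = L

/-- X is a digitally convex disk with bounding curve S: the endpoints of the maximal
digital line segments of S are exactly the vertices (extreme points) of hull(X). -/
def ConvexDiskWith (S X : Set (ℤ × ℤ)) : Prop :=
  BoundingCurve S X ∧
  {p | ∃ L, MaxSegOf S L ∧ Endpoint L p} =
    {p | p ∈ X ∧ emb p ∈ Set.extremePoints ℝ (convexHull ℝ (emb '' X))}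

/-- X is a digitally convex disk. -/
def ConvexDisk (X : Set (ℤ × ℤ)) : Prop := ∃ S, ConvexDiskWith S X

/-- X is digitally convex: a point, a digital segment, or a convex disk. -/
def DigConvex (X : Set (ℤ × ℤ)) : Prop :=
  (∃ p, X = {p}) ∨ DigSegment X ∨ ConvexDisk X

/-- C is a c₂-component of ℤ² \ X. -/
def IsC2Component (X C : Set (ℤ × ℤ)) : Prop :=
  ∃ c ∈ Xᶜ, C = {y | Reach c2Adj Xᶜ c y}

/-- N*(X, c₂, x). -/
def NStar (X : Set (ℤ × ℤ)) (x : ℤ × ℤ) : Set (ℤ × ℤ) :=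
  {y ∈ X | y = x ∨ c2Adj y x}

/-- A digital line segment in ℤ² must be vertical, horizontal, or have slope ±1. -/
theorem digSegment_slopes (S : Set (ℤ × ℤ)) (hS : DigSegment S) :
    (∀ p ∈ S, ∀ q ∈ S, p.1 = q.1) ∨
    (∀ p ∈ S, ∀ q ∈ S, p.2 = q.2) ∨
    (∀ p ∈ S, ∀ q ∈ S, p.1 - q.1 = p.2 - q.2) ∨
    (∀ p ∈ S, ∀ q ∈ S, p.1 - q.1 = -(p.2 - q.2)) := by

  obtain ⟨hcard, hconn, hcol⟩ := hS
  have hfin : S.Finite := Set.finite_of_ncard_pos (by omega)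
  obtain ⟨a, ha, b, hb, hab⟩ := (Set.one_lt_ncard hfin).mp (by omega)
  have hpath := hconn a ha b hb
  obtain ⟨c, ⟨-, hc, hadj⟩, -⟩ := (Relation.ReflTransGen.cases_head hpath).resolve_left hab
  obtain ⟨hne, hd1, hd2⟩ := hadj
  have hmem : emb a ∈ emb '' S := ⟨a, ha, rfl⟩
  obtain ⟨v, hv⟩ := (collinear_iff_of_mem hmem).mp hcol
  have key : ∀ p ∈ S, (a.1 - c.1) * (p.2 - a.2) = (a.2 - c.2) * (p.1 - a.1) := by
    intro p hp
    obtain ⟨t, ht⟩ := hv (emb c) ⟨c, hc, rfl⟩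
    obtain ⟨u, hu⟩ := hv (emb p) ⟨p, hp, rfl⟩
    have ht1 : (c.1 : ℝ) = t * v.1 + a.1 := congrArg Prod.fst ht
    have ht2 : (c.2 : ℝ) = t * v.2 + a.2 := congrArg Prod.snd ht
    have hu1 : (p.1 : ℝ) = u * v.1 + a.1 := congrArg Prod.fst hu
    have hu2 : (p.2 : ℝ) = u * v.2 + a.2 := congrArg Prod.snd hu
    have hr : ((a.1 : ℝ) - c.1) * (p.2 - a.2) = ((a.2 : ℝ) - c.2) * (p.1 - a.1) := by
      rw [ht1, ht2, hu1, hu2]; ring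
    exact_mod_cast hr
  have hne' : a.1 ≠ c.1 ∨ a.2 ≠ c.2 := by
    by_contra h
    push_neg at h
    exact hne (Prod.ext h.1 h.2)
  have h1 := abs_le.mp hd1
  have h2 := abs_le.mp hd2
  by_cases e1 : a.1 = c.1
  · left
    have hd2ne : a.2 - c.2 ≠ 0 := by
      rcases hne' with h | h
      · exact absurd e1 h
      · omega
    intro p hp q hq
    have kp := key p hp
    have kq := key q hq
    rw [show a.1 - c.1 = 0 by omega, zero_mul] at kp kq
    have hp1 : p.1 - a.1 = 0 := by
      rcases mul_eq_zero.mp kp.symm with h | h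
      · exact absurd h hd2ne
      · exact h
    have hq1 : q.1 - a.1 = 0 := by
      rcases mul_eq_zero.mp kq.symm with h | h
      · exact absurd h hd2ne
      · exact h
    omega
  · by_cases e2 : a.2 = c.2
    · right; left
      have hd1ne : a.1 - c.1 ≠ 0 := by omega
      intro p hp q hq
      have kp := key p hp
      have kq := key q hq
      rw [show a.2 - c.2 = 0 by omega, zero_mul] at kp kq
      have hp2 : p.2 - a.2 = 0 := by
        rcases mul_eq_zero.mp kp with h | h
        · exact absurd h hd1ne
        · exact h
      have hq2 : q.2 - a.2 = 0 := by
        rcases mul_eq_zero.mp kq with h | h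
        · exact absurd h hd1ne
        · exact h
      omega
    · have hd1v : a.1 - c.1 = 1 ∨ a.1 - c.1 = -1 := by omega
      have hd2v : a.2 - c.2 = 1 ∨ a.2 - c.2 = -1 := by omega
      by_cases e3 : a.1 - c.1 = a.2 - c.2
      · right; right; left
        intro p hp q hq
        have kp := key p hp
        have kq := key q hq
        rw [e3] at kp kq
        have hd2ne : a.2 - c.2 ≠ 0 := by omega
        have hp' := mul_left_cancel₀ hd2ne kp
        have hq' := mul_left_cancel₀ hd2ne kq
        omega
      · right; right; right
        have e4 : a.1 - c.1 = -(a.2 - c.2) := by omega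
        intro p hp q hq
        have kp := key p hp
        have kq := key q hq
        rw [e4, neg_mul] at kp kq
        have hd2ne : a.2 - c.2 ≠ 0 := by omega
        have hp2 : (a.2 - c.2) * (p.2 - a.2) = (a.2 - c.2) * (-(p.1 - a.1)) := by linarith [kp]
        have hq2 : (a.2 - c.2) * (q.2 - a.2) = (a.2 - c.2) * (-(q.1 - a.1)) := by linarith [kq]
        have hp3 := mul_left_cancel₀ hd2ne hp2
        have hq3 := mul_left_cancel₀ hd2ne hq2
        omega
end

section
/- Jordan Curve Theorem for digital topology: if S ⊆ ℤ² is a c₂-simple closed curve with at least 4 points, then ℤ² \ S has exactly two c₁-connected components, one finite and one infinite. -/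
/-!
Every point off the curve `S` walks straight up until it either becomes a c₂-neighbour of `S` or
passes above `S`, where it can walk to the point above the top of `S`. Around a curve point `s k`,
the c₂-neighbours other than `s (k ± 1)` form two c₁-connected arcs, one on each side of the curve,
and the left arcs of consecutive points are c₁-linked across the edge between them. So all
points left of the curve are c₁-connected, and so are all points right of it (the left of the
reversed curve): `ℤ² \ S` has at most two components.

The parity of the number of edges of `S` met by a horizontal ray is constant along c₁-paths
off `S`, vanishes outside a box containing `S`, and is `1` just below the rightmost top point of
`S`. So the component of that point is finite, and the rest of `ℤ² \ S` is a second, infinite,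
component.
-/

theorem c1Adj_comm (p q : ℤ × ℤ) : c1Adj p q ↔ c1Adj q p := by
  simp only [c1Adj, abs_sub_comm]

theorem c1Adj_add_left (v : ℤ × ℤ) {a b : ℤ × ℤ} (h : c1Adj a b) : c1Adj (v + a) (v + b) := by
  simpa [c1Adj] using h

theorem eq_or_c2Adj_iff (p q : ℤ × ℤ) :
    p = q ∨ c2Adj p q ↔ |p.1 - q.1| ≤ 1 ∧ |p.2 - q.2| ≤ 1 := by
  by_cases h : p = q
  · simp [h]
  · simp [c2Adj, h]

theorem c2Adj_comm (p q : ℤ × ℤ) : c2Adj p q ↔ c2Adj q p := by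
  simp only [c2Adj, ne_comm, abs_sub_comm]

namespace Reach

variable {adj : ℤ × ℤ → ℤ × ℤ → Prop} {W : Set (ℤ × ℤ)} {x y z : ℤ × ℤ}

theorem refl : Reach adj W x x :=
  Relation.ReflTransGen.refl

theorem trans (hxy : Reach adj W x y) (hyz : Reach adj W y z) : Reach adj W x z :=
  Relation.ReflTransGen.trans hxy hyz

theorem single (hx : x ∈ W) (hy : y ∈ W) (h : adj x y) : Reach adj W x y :=
  Relation.ReflTransGen.single ⟨hx, hy, h⟩

theorem mem (h : Reach adj W x y) (hx : x ∈ W) : y ∈ W := by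
  induction h with
  | refl => exact hx
  | tail _ hyz => exact hyz.2.1

theorem symm (h : Reach c1Adj W x y) : Reach c1Adj W y x := by
  induction h with
  | refl => exact refl
  | tail _ hyz ih => exact (single hyz.2.1 hyz.1 ((c1Adj_comm _ _).1 hyz.2.2)).trans ih

theorem of_row {b : ℤ} (hW : ∀ a, (a, b) ∈ W) (a a' : ℤ) : Reach c1Adj W (a, b) (a', b) := by
  induction a' using Int.inductionOn' (b := a) with
  | zero => exact refl
  | succ a' _ ih => exact ih.trans (single (hW _) (hW _) (by simp [c1Adj]))
  | pred a' _ ih => exact ih.trans (single (hW _) (hW _) (by simp [c1Adj]))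

theorem of_le_snd {c : ℤ} (hW : ∀ p : ℤ × ℤ, c ≤ p.2 → p ∈ W) {p q : ℤ × ℤ} (hp : c ≤ p.2)
    (hq : c ≤ q.2) : Reach c1Adj W p q := by
  have column : ∀ a b, c ≤ b → Reach c1Adj W (a, c) (a, b) := fun a b hb => by
    induction b, hb using Int.leInduction with
    | base => exact refl
    | succ b hb ih =>
      exact ih.trans (single (hW _ hb) (hW _ (by simp only; omega)) (by simp [c1Adj]))
  exact ((column p.1 p.2 hp).symm.trans (of_row (fun a => hW _ le_rfl) _ _)).trans
    (column q.1 q.2 hq)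

end Reach

def ringVec : Fin 8 → ℤ × ℤ :=
  ![(1, 0), (1, 1), (0, 1), (-1, 1), (-1, 0), (-1, -1), (0, -1), (1, -1)]

/-- The c₂-neighbour of the origin at angle `θ · 45°`. -/
def ringDir (θ : ℤ) : ℤ × ℤ := ringVec (θ : ZMod 8)

theorem ringDir_eq_iff {a b : ℤ} : ringDir a = ringDir b ↔ a % 8 = b % 8 := by
  have h := ZMod.intCast_eq_intCast_iff' a b 8
  push_cast at h
  rw [← h]
  exact ⟨fun hab => (by decide : Function.Injective ringVec) hab,
    fun hab => by rw [ringDir, hab]; rfl⟩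

theorem ringDir_congr {a b : ℤ} (h : a % 8 = b % 8) : ringDir a = ringDir b :=
  ringDir_eq_iff.2 h

theorem exists_fin_eq_emod (a : ℤ) : ∃ r : Fin 8, (r : ℤ) = a % 8 :=
  ⟨⟨(a % 8).toNat, by omega⟩, by simp only; omega⟩

theorem c1Adj_ringDir_add_one (θ : ℤ) : c1Adj (ringDir θ) (ringDir (θ + 1)) := by
  obtain ⟨r, hr⟩ := exists_fin_eq_emod θ
  have h : ∀ r : Fin 8, c1Adj (ringDir r) (ringDir (r + 1)) := by unfold c1Adj; decide
  rw [ringDir_congr (a := θ) (b := r) (by omega),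
    ringDir_congr (a := θ + 1) (b := r + 1) (by omega)]
  exact h r

theorem ringDir_add_four (θ : ℤ) : ringDir (θ + 4) = -ringDir θ := by
  obtain ⟨r, hr⟩ := exists_fin_eq_emod θ
  have h : ∀ r : Fin 8, ringDir (r + 4) = -ringDir r := by decide
  rw [ringDir_congr (a := θ) (b := r) (by omega),
    ringDir_congr (a := θ + 4) (b := r + 4) (by omega)]
  exact h r

theorem c2Adj_add_ringDir (v : ℤ × ℤ) (θ : ℤ) : c2Adj v (v + ringDir θ) := by
  obtain ⟨r, hr⟩ := exists_fin_eq_emod θ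
  have h : ∀ r : Fin 8, ringDir r ≠ 0 ∧ |(ringDir r).1| ≤ 1 ∧ |(ringDir r).2| ≤ 1 := by decide
  rw [ringDir_congr (a := θ) (b := r) (by omega)]
  obtain ⟨h0, h1, h2⟩ := h r
  exact ⟨fun h => h0 (by simpa using h.symm), by simpa using h1, by simpa using h2⟩

theorem exists_ringDir_of_c2Adj {p q : ℤ × ℤ} (h : c2Adj p q) : ∃ θ, q = p + ringDir θ := by
  have key : ∀ d ∈ (Finset.Icc (-1) 1 ×ˢ Finset.Icc (-1) 1 : Finset (ℤ × ℤ)), d ≠ 0 →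
      ∃ r : Fin 8, ringDir r = d := by decide
  obtain ⟨hne, h1, h2⟩ := h
  obtain ⟨r, hr⟩ := key (q - p) (by simp only [abs_le] at h1 h2; simp; omega)
    (sub_ne_zero.2 hne.symm)
  exact ⟨r, by rw [hr]; abel⟩

/-- `2 - a % 2` is the counterclockwise offset from angle `a` to the next axis direction. -/
theorem ringDir_gap {a b : ℤ}
    (h : ¬(|(ringDir a - ringDir b).1| ≤ 1 ∧ |(ringDir a - ringDir b).2| ≤ 1)) :
    2 - a % 2 + (2 - b % 2) ≤ (b - a) % 8 := by
  obtain ⟨r, hr⟩ := exists_fin_eq_emod a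
  obtain ⟨t, ht⟩ := exists_fin_eq_emod b
  have key : ∀ r t : Fin 8,
      ¬(|(ringDir r - ringDir t).1| ≤ 1 ∧ |(ringDir r - ringDir t).2| ≤ 1) →
      2 - (r : ℤ) % 2 + (2 - (t : ℤ) % 2) ≤ ((t : ℤ) - r) % 8 := by decide
  rw [ringDir_congr (a := a) (b := r) (by omega), ringDir_congr (a := b) (b := t) (by omega)] at h
  have := key r t h
  omega

theorem ringDir_edge (a : ℤ) :
    ringDir (a + (2 - a % 2)) = ringDir a + ringDir (a + 4 - (2 - a % 2)) ∨
      c1Adj (ringDir (a + (2 - a % 2))) (ringDir a + ringDir (a + 4 - (2 - a % 2))) := by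
  obtain ⟨r, hr⟩ := exists_fin_eq_emod a
  have key : ∀ r : Fin 8,
      ringDir (r + (2 - (r : ℤ) % 2)) = ringDir r + ringDir (r + 4 - (2 - (r : ℤ) % 2)) ∨
      c1Adj (ringDir (r + (2 - (r : ℤ) % 2)))
        (ringDir r + ringDir (r + 4 - (2 - (r : ℤ) % 2))) := by
    unfold c1Adj; decide
  rw [ringDir_congr (a := a) (b := r) (by omega),
    ringDir_congr (a := a + (2 - a % 2)) (b := r + (2 - (r : ℤ) % 2)) (by omega),
    ringDir_congr (a := a + 4 - (2 - a % 2)) (b := r + 4 - (2 - (r : ℤ) % 2)) (by omega)]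
  exact key r

theorem Reach.of_ringDir {W : Set (ℤ × ℤ)} (v : ℤ × ℤ) {a b : ℤ}
    (hW : ∀ θ, a ≤ θ → θ ≤ b → v + ringDir θ ∈ W) {θ₁ θ₂ : ℤ} (h₁ : a ≤ θ₁ ∧ θ₁ ≤ b)
    (h₂ : a ≤ θ₂ ∧ θ₂ ≤ b) : Reach c1Adj W (v + ringDir θ₁) (v + ringDir θ₂) := by
  wlog hle : θ₁ ≤ θ₂ generalizing θ₁ θ₂
  · exact (this h₂ h₁ (by omega)).symm
  induction θ₂, hle using Int.leInduction with
  | base => exact Reach.refl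
  | succ θ hθ ih =>
    exact (ih ⟨by omega, by omega⟩).trans (Reach.single (hW _ (by omega) (by omega))
      (hW _ (by omega) h₂.2) (c1Adj_add_left v (c1Adj_ringDir_add_one θ)))

theorem ite_xor_eq_ite_add_ite (A B : Prop) [Decidable A] [Decidable B] :
    (if Xor A B then (1 : ZMod 2) else 0) = (if A then 1 else 0) + if B then 1 else 0 := by
  by_cases hA : A <;> by_cases hB : B <;> simp [hA, hB]; decide

section CrossingParity

variable {m : ℕ} (s : ZMod m → ℤ × ℤ)

/-- The edge from `s i` to `s (i + 1)` meets the horizontal ray from `p + (1/2, 1/2)` towards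
`+x`; its intersection with the line `y = p.2 + 1/2` is the midpoint of the edge. -/
def Crosses (p : ℤ × ℤ) (i : ZMod m) : Prop :=
  ((s i).2 = p.2 ∧ (s (i + 1)).2 = p.2 + 1 ∨ (s i).2 = p.2 + 1 ∧ (s (i + 1)).2 = p.2) ∧
    2 * p.1 + 1 ≤ (s i).1 + (s (i + 1)).1

instance (p : ℤ × ℤ) (i : ZMod m) : Decidable (Crosses s p i) := by
  unfold Crosses
  infer_instance

variable [NeZero m]

def crossingParity (p : ℤ × ℤ) : ZMod 2 := ∑ i, if Crosses s p i then 1 else 0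

theorem sum_add_comp_add_one_eq_zero (g : ZMod m → ZMod 2) : ∑ i, (g i + g (i + 1)) = 0 := by
  rw [Finset.sum_add_distrib, Fintype.sum_equiv (Equiv.addRight 1) (fun i => g (i + 1)) g
    (fun _ => rfl), CharTwo.add_self_eq_zero]

variable {s}

theorem crossingParity_eq_of_fst_add_one (hs : ∀ i, c2Adj (s i) (s (i + 1))) {p : ℤ × ℤ}
    (hp : p ∉ Set.range s) (hq : (p.1 + 1, p.2) ∉ Set.range s) :
    crossingParity s p = crossingParity s (p.1 + 1, p.2) := by
  refine Finset.sum_congr rfl fun i _ => if_congr ?_ rfl rfl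
  have hi := (hs i).2
  simp only [abs_le] at hi
  have h₁ : s i ≠ p := fun h => hp ⟨i, h⟩
  have h₂ : s (i + 1) ≠ p := fun h => hp ⟨i + 1, h⟩
  have h₃ : s i ≠ (p.1 + 1, p.2) := fun h => hq ⟨i, h⟩
  have h₄ : s (i + 1) ≠ (p.1 + 1, p.2) := fun h => hq ⟨i + 1, h⟩
  simp only [ne_eq, Prod.ext_iff, not_and_or] at h₁ h₂ h₃ h₄
  simp only [Crosses]
  omega

theorem crossingParity_eq_of_snd_add_one (hs : ∀ i, c2Adj (s i) (s (i + 1))) {p : ℤ × ℤ}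
    (hq : (p.1, p.2 + 1) ∉ Set.range s) :
    crossingParity s p = crossingParity s (p.1, p.2 + 1) := by
  set T : ZMod m → ZMod 2 := fun j => if (s j).2 = p.2 + 1 ∧ p.1 + 1 ≤ (s j).1 then 1 else 0
  have key : ∀ i, ((if Crosses s p i then 1 else 0 : ZMod 2) +
      if Crosses s (p.1, p.2 + 1) i then 1 else 0) = T i + T (i + 1) := by
    intro i
    rw [← ite_xor_eq_ite_add_ite, ← ite_xor_eq_ite_add_ite]
    refine if_congr ?_ rfl rfl
    have hi := (hs i).2
    simp only [abs_le] at hi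
    have h₁ : s i ≠ (p.1, p.2 + 1) := fun h => hq ⟨i, h⟩
    have h₂ : s (i + 1) ≠ (p.1, p.2 + 1) := fun h => hq ⟨i + 1, h⟩
    simp only [ne_eq, Prod.ext_iff, not_and_or] at h₁ h₂
    simp only [Crosses, Xor]
    omega
  rw [← CharTwo.add_eq_zero, crossingParity, crossingParity, ← Finset.sum_add_distrib,
    Finset.sum_congr rfl fun i _ => key i, sum_add_comp_add_one_eq_zero]

theorem crossingParity_eq_of_c1Adj (hs : ∀ i, c2Adj (s i) (s (i + 1))) {p q : ℤ × ℤ}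
    (hp : p ∉ Set.range s) (hq : q ∉ Set.range s) (h : c1Adj p q) :
    crossingParity s p = crossingParity s q := by
  obtain ⟨a, b⟩ := p
  obtain ⟨c, d⟩ := q
  simp only [c1Adj] at h
  have : c = a + 1 ∧ d = b ∨ a = c + 1 ∧ b = d ∨ c = a ∧ d = b + 1 ∨ a = c ∧ b = d + 1 := by
    rcases abs_cases (a - c) with ⟨h₁, h₁'⟩ | ⟨h₁, h₁'⟩ <;>
      rcases abs_cases (b - d) with ⟨h₂, h₂'⟩ | ⟨h₂, h₂'⟩ <;> omega
  rcases this with ⟨rfl, rfl⟩ | ⟨rfl, rfl⟩ | ⟨rfl, rfl⟩ | ⟨rfl, rfl⟩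
  · exact crossingParity_eq_of_fst_add_one hs hp hq
  · exact (crossingParity_eq_of_fst_add_one hs hq hp).symm
  · exact crossingParity_eq_of_snd_add_one hs hq
  · exact (crossingParity_eq_of_snd_add_one (p := (a, d)) hs hp).symm

theorem crossingParity_eq_of_reach (hs : ∀ i, c2Adj (s i) (s (i + 1))) {p q : ℤ × ℤ}
    (h : Reach c1Adj (Set.range s)ᶜ p q) : crossingParity s p = crossingParity s q := by
  induction h with
  | refl => rfl
  | tail _ hyz ih => exact ih.trans (crossingParity_eq_of_c1Adj hs hyz.1 hyz.2.1 hyz.2.2)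

theorem crossingParity_eq_zero_of_notMem_Icc (hs : ∀ i, c2Adj (s i) (s (i + 1)))
    {l u p : ℤ × ℤ} (hl : ∀ i, l ≤ s i) (hu : ∀ i, s i ≤ u) (hp : p ∉ Set.Icc l u) :
    crossingParity s p = 0 := by
  simp only [Set.mem_Icc, Prod.le_def, not_and_or, not_le] at hp
  by_cases hleft : p.1 < l.1
  · set T : ZMod m → ZMod 2 := fun j => if p.2 + 1 ≤ (s j).2 then 1 else 0
    have key : ∀ i, (if Crosses s p i then 1 else 0 : ZMod 2) = T i + T (i + 1) := by
      intro i
      rw [← ite_xor_eq_ite_add_ite]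
      refine if_congr ?_ rfl rfl
      have hi := (hs i).2
      have h₁ := (hl i).1
      have h₂ := (hl (i + 1)).1
      simp only [abs_le] at hi
      simp only [Crosses, Xor]
      omega
    rw [crossingParity, Finset.sum_congr rfl fun i _ => key i, sum_add_comp_add_one_eq_zero]
  · refine Finset.sum_eq_zero fun i _ => if_neg ?_
    have := hl i
    have := hl (i + 1)
    have := hu i
    have := hu (i + 1)
    simp only [Prod.le_def] at *
    simp only [Crosses]
    omega

theorem crossingParity_comp_neg (p : ℤ × ℤ) :
    crossingParity (fun i => s (-i)) p = crossingParity s p := by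
  refine Fintype.sum_equiv ((Equiv.neg _).trans (Equiv.subRight 1)) _ _
    fun i => if_congr ?_ rfl rfl
  simp only [Crosses, Equiv.trans_apply, Equiv.neg_apply, Equiv.subRight_apply, sub_add_cancel,
    show -(i + 1) = -i - 1 by ring]
  omega

end CrossingParity

theorem ZMod.natCast_ne_zero_of_lt {m a : ℕ} (ha : 0 < a) (ham : a < m) : (a : ZMod m) ≠ 0 := by
  rw [Ne, ZMod.natCast_eq_zero_iff]
  exact fun h => absurd (Nat.le_of_dvd ha h) (by omega)

structure SimpleClosedCurve (m : ℕ) where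
  s : ZMod m → ℤ × ℤ
  four_le : 4 ≤ m
  injective : Function.Injective s
  c2Adj_succ : ∀ i, c2Adj (s i) (s (i + 1))
  eq_succ_or_eq_pred : ∀ i j, c2Adj (s i) (s j) → j = i + 1 ∨ j = i - 1

theorem SCC.exists_curve {S : Set (ℤ × ℤ)} (hS : SCC S) :
    ∃ m, ∃ C : SimpleClosedCurve m, Set.range C.s = S := by
  obtain ⟨m, hm, s, hinj, hrange, hadj, hclosed⟩ := hS
  exact ⟨m, ⟨s, hm, hinj, hadj, hclosed⟩, hrange⟩

namespace SimpleClosedCurve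

variable {m : ℕ} (C : SimpleClosedCurve m)

theorem eq_pred_or_eq_succ_of_c2Adj {x : ℤ × ℤ} (hx : x ∈ Set.range C.s) {k : ZMod m}
    (h : c2Adj x (C.s k)) : x = C.s (k - 1) ∨ x = C.s (k + 1) := by
  obtain ⟨i, rfl⟩ := hx
  rcases C.eq_succ_or_eq_pred i k h with rfl | rfl
  · exact Or.inl (by rw [add_sub_cancel_right])
  · exact Or.inr (by rw [sub_add_cancel])

theorem not_near_succ_pred (k : ZMod m) :
    ¬(|(C.s (k + 1) - C.s (k - 1)).1| ≤ 1 ∧ |(C.s (k + 1) - C.s (k - 1)).2| ≤ 1) := by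
  rw [Prod.fst_sub, Prod.snd_sub, ← eq_or_c2Adj_iff]
  have hm := C.four_le
  rintro (h | h)
  · exact ZMod.natCast_ne_zero_of_lt (m := m) (a := 2) (by norm_num) (by omega)
      (by push_cast; linear_combination C.injective h)
  · rcases C.eq_succ_or_eq_pred _ _ h with h | h
    · exact ZMod.natCast_ne_zero_of_lt (m := m) (a := 3) (by norm_num) (by omega)
        (by push_cast; linear_combination -h)
    · exact ZMod.natCast_ne_zero_of_lt (m := m) (a := 1) (by norm_num) (by omega)
        (by push_cast; linear_combination -h)

def reverse : SimpleClosedCurve m where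
  s i := C.s (-i)
  four_le := C.four_le
  injective _ _ h := neg_injective (C.injective h)
  c2Adj_succ i := by
    have h := C.c2Adj_succ (-(i + 1))
    rwa [show -(i + 1) + 1 = -i by ring, c2Adj_comm] at h
  eq_succ_or_eq_pred i j h :=
    (C.eq_succ_or_eq_pred _ _ h).symm.imp (fun h => by linear_combination -h)
      (fun h => by linear_combination -h)

theorem reverse_s (i : ZMod m) : C.reverse.s i = C.s (-i) := rfl

theorem range_reverse : Set.range C.reverse.s = Set.range C.s :=
  neg_surjective.range_comp C.s

noncomputable def dir (k : ZMod m) : ℤ := (exists_ringDir_of_c2Adj (C.c2Adj_succ k)).choose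

theorem s_add_one (k : ZMod m) : C.s (k + 1) = C.s k + ringDir (C.dir k) :=
  (exists_ringDir_of_c2Adj (C.c2Adj_succ k)).choose_spec

theorem s_sub_one (k : ZMod m) : C.s (k - 1) = C.s k + ringDir (C.dir (k - 1) + 4) := by
  rw [ringDir_add_four, ← sub_eq_add_neg, eq_sub_iff_add_eq, ← C.s_add_one, sub_add_cancel]

theorem dir_gap (k : ZMod m) :
    2 - C.dir k % 2 + (2 - C.dir (k - 1) % 2) ≤ (C.dir (k - 1) + 4 - C.dir k) % 8 := by
  have h := C.not_near_succ_pred k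
  rw [C.s_add_one, C.s_sub_one, add_sub_add_left_eq_sub] at h
  have := ringDir_gap h
  omega

/-- The angles around `s k` strictly between the directions of `s (k + 1)` and of `s (k - 1)`,
counterclockwise. -/
def leftArc (k : ZMod m) : Set ℤ :=
  Set.Ioo (C.dir k) (C.dir k + (C.dir (k - 1) + 4 - C.dir k) % 8)

theorem notMem_range_of_mem_leftArc {k : ZMod m} {θ : ℤ} (hθ : θ ∈ C.leftArc k) :
    C.s k + ringDir θ ∉ Set.range C.s := by
  simp only [leftArc, Set.mem_Ioo] at hθ
  intro hx
  rcases C.eq_pred_or_eq_succ_of_c2Adj hx ((c2Adj_comm _ _).1 (c2Adj_add_ringDir _ _)) with h | h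
  · rw [C.s_sub_one] at h
    have := ringDir_eq_iff.1 (add_left_cancel h)
    omega
  · rw [C.s_add_one] at h
    have := ringDir_eq_iff.1 (add_left_cancel h)
    omega

theorem reach_of_mem_leftArc {k : ZMod m} {θ₁ θ₂ : ℤ} (h₁ : θ₁ ∈ C.leftArc k)
    (h₂ : θ₂ ∈ C.leftArc k) :
    Reach c1Adj (Set.range C.s)ᶜ (C.s k + ringDir θ₁) (C.s k + ringDir θ₂) := by
  simp only [leftArc, Set.mem_Ioo] at h₁ h₂
  exact Reach.of_ringDir _ (a := C.dir k + 1)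
    (b := C.dir k + (C.dir (k - 1) + 4 - C.dir k) % 8 - 1)
    (fun θ ha hb => C.notMem_range_of_mem_leftArc ⟨by omega, by omega⟩)
    ⟨by omega, by omega⟩ ⟨by omega, by omega⟩

/-- The first c₁-neighbour of `s k` counterclockwise from `s (k + 1)`; it lies on the left of the
edge from `s k` to `s (k + 1)`. -/
noncomputable def leftPt (k : ZMod m) : ℤ × ℤ := C.s k + ringDir (C.dir k + (2 - C.dir k % 2))

theorem leftPt_angle_mem_leftArc (k : ZMod m) : C.dir k + (2 - C.dir k % 2) ∈ C.leftArc k := by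
  have := C.dir_gap k
  simp only [leftArc, Set.mem_Ioo]
  omega

theorem reach_leftPt_add_one (k : ZMod m) :
    Reach c1Adj (Set.range C.s)ᶜ (C.leftPt k) (C.leftPt (k + 1)) := by
  set a := C.dir k
  have hθ : C.dir (k + 1) + (a + 4 - C.dir (k + 1)) % 8 - (2 - a % 2) ∈ C.leftArc (k + 1) := by
    have := C.dir_gap (k + 1)
    simp only [leftArc, Set.mem_Ioo, add_sub_cancel_right] at this ⊢
    omega
  have hq : C.s (k + 1) + ringDir (C.dir (k + 1) + (a + 4 - C.dir (k + 1)) % 8 - (2 - a % 2)) =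
      C.s k + (ringDir a + ringDir (a + 4 - (2 - a % 2))) := by
    rw [ringDir_congr (b := a + 4 - (2 - a % 2)) (by omega), C.s_add_one, add_assoc]
  -- The last point of the left arc at `s (k + 1)` equals or is c₁-adjacent to `leftPt k`.
  refine Reach.trans ?_ (C.reach_of_mem_leftArc hθ (C.leftPt_angle_mem_leftArc (k + 1)))
  rw [hq]
  rcases ringDir_edge a with h | h
  · rw [leftPt, h]
    exact Reach.refl
  · exact Reach.single (C.notMem_range_of_mem_leftArc (C.leftPt_angle_mem_leftArc k))
      (hq ▸ C.notMem_range_of_mem_leftArc hθ) (c1Adj_add_left _ h)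

theorem reach_leftPt [NeZero m] (i j : ZMod m) :
    Reach c1Adj (Set.range C.s)ᶜ (C.leftPt i) (C.leftPt j) := by
  have key : ∀ n : ℕ, Reach c1Adj (Set.range C.s)ᶜ (C.leftPt i) (C.leftPt (i + n)) := by
    intro n
    induction n with
    | zero => simpa using Reach.refl
    | succ n ih => exact ih.trans (by simpa [add_assoc] using C.reach_leftPt_add_one (i + n))
  simpa using key (j - i).val

theorem reach_leftPt_of_mem_leftArc [NeZero m] {k : ZMod m} {θ : ℤ} (hθ : θ ∈ C.leftArc k) :
    Reach c1Adj (Set.range C.s)ᶜ (C.s k + ringDir θ) (C.leftPt 0) :=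
  (C.reach_of_mem_leftArc hθ (C.leftPt_angle_mem_leftArc k)).trans (C.reach_leftPt k 0)

/-- The left side of `C.reverse` is the right side of `C`. -/
def ReachesSide (q : ℤ × ℤ) : Prop :=
  Reach c1Adj (Set.range C.s)ᶜ q (C.leftPt 0) ∨ Reach c1Adj (Set.range C.s)ᶜ q (C.reverse.leftPt 0)

/-- The ring around `s k` minus `s (k ± 1)` splits into the left arc of `C` and the left arc of
`C.reverse`. -/
theorem reachesSide_add_ringDir [NeZero m] (k : ZMod m) {ψ : ℤ}
    (hψ : C.s k + ringDir ψ ∉ Set.range C.s) : C.ReachesSide (C.s k + ringDir ψ) := by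
  have hnext : ψ % 8 ≠ C.dir k % 8 := fun h => hψ ⟨k + 1, by rw [C.s_add_one, ringDir_congr h]⟩
  have hprev : ψ % 8 ≠ (C.dir (k - 1) + 4) % 8 :=
    fun h => hψ ⟨k - 1, by rw [C.s_sub_one, ringDir_congr h]⟩
  by_cases hside : (ψ - C.dir k) % 8 < (C.dir (k - 1) + 4 - C.dir k) % 8
  · left
    have hθ : C.dir k + (ψ - C.dir k) % 8 ∈ C.leftArc k := by
      simp only [leftArc, Set.mem_Ioo]
      omega
    have h := C.reach_leftPt_of_mem_leftArc hθ
    rwa [ringDir_congr (a := C.dir k + (ψ - C.dir k) % 8) (b := ψ) (by omega)] at h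
  · right
    have h₁ := C.reverse.s_add_one (-k)
    have h₂ := C.reverse.s_sub_one (-k)
    simp only [reverse_s, neg_neg] at h₁ h₂
    rw [show -(-k + 1) = k - 1 by ring, C.s_sub_one] at h₁
    rw [show -(-k - 1) = k + 1 by ring, C.s_add_one] at h₂
    have e₁ := ringDir_eq_iff.1 (add_left_cancel h₁)
    have e₂ := ringDir_eq_iff.1 (add_left_cancel h₂)
    have := C.dir_gap k
    have hθ : C.reverse.dir (-k) + (ψ - C.reverse.dir (-k)) % 8 ∈ C.reverse.leftArc (-k) := by
      simp only [leftArc, Set.mem_Ioo]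
      omega
    have h := C.reverse.reach_leftPt_of_mem_leftArc hθ
    rwa [range_reverse, reverse_s, neg_neg, ringDir_congr
      (a := C.reverse.dir (-k) + (ψ - C.reverse.dir (-k)) % 8) (b := ψ) (by omega)] at h

theorem exists_reach_add_ringDir [NeZero m] {q : ℤ × ℤ} (hq : q ∉ Set.range C.s) :
    ∃ k ψ, Reach c1Adj (Set.range C.s)ᶜ q (C.s k + ringDir ψ) := by
  obtain ⟨t, -, ht⟩ :=
    Finset.exists_max_image Finset.univ (fun i => (C.s i).2) ⟨0, Finset.mem_univ 0⟩
  have hfree : ∀ p : ℤ × ℤ, (C.s t).2 + 1 ≤ p.2 → p ∈ (Set.range C.s)ᶜ := by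
    rintro p hp ⟨i, rfl⟩
    have := ht i (Finset.mem_univ i)
    omega
  -- Walk upwards until a curve point lies directly above, or until the walk passes above the curve.
  suffices ∀ n : ℕ, ∀ q ∉ Set.range C.s, (C.s t).2 + 1 - q.2 ≤ n →
      ∃ k ψ, Reach c1Adj (Set.range C.s)ᶜ q (C.s k + ringDir ψ) from
    this _ q hq (Int.self_le_toNat _)
  intro n
  induction n with
  | zero =>
    intro q _ hn
    exact ⟨t, 2, Reach.of_le_snd hfree (by omega) (by simp [show ringDir 2 = (0, 1) from rfl])⟩
  | succ n ih =>
    intro q hq hn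
    by_cases hup : (q.1, q.2 + 1) ∈ Set.range C.s
    · obtain ⟨j, hj⟩ := hup
      refine ⟨j, 6, ?_⟩
      rw [hj, show (q.1, q.2 + 1) + ringDir 6 = q by
        ext <;> simp [show ringDir 6 = (0, -1) from rfl]]
      exact Reach.refl
    · obtain ⟨k, ψ, h⟩ := ih _ hup (by simp only; omega)
      exact ⟨k, ψ, (Reach.single hq hup (by simp [c1Adj])).trans h⟩

theorem reachesSide_of_notMem [NeZero m] {q : ℤ × ℤ} (hq : q ∉ Set.range C.s) :
    C.ReachesSide q := by
  obtain ⟨k, ψ, h⟩ := C.exists_reach_add_ringDir hq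
  exact (C.reachesSide_add_ringDir k (h.mem hq)).imp h.trans h.trans

theorem reach_of_not_reach [NeZero m] {p b b' : ℤ × ℤ} (hp : p ∉ Set.range C.s)
    (hb : b ∉ Set.range C.s) (hb' : b' ∉ Set.range C.s)
    (hpb : ¬Reach c1Adj (Set.range C.s)ᶜ p b) (hpb' : ¬Reach c1Adj (Set.range C.s)ᶜ p b') :
    Reach c1Adj (Set.range C.s)ᶜ b b' := by
  rcases C.reachesSide_of_notMem hp with h | h <;>
    rcases C.reachesSide_of_notMem hb with hb | hb <;>
    rcases C.reachesSide_of_notMem hb' with hb' | hb'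
  all_goals first
    | exact hb.trans hb'.symm
    | exact absurd (h.trans hb.symm) hpb
    | exact absurd (h.trans hb'.symm) hpb'

theorem crossingParity_reverse [NeZero m] (p : ℤ × ℤ) :
    crossingParity C.reverse.s p = crossingParity C.s p :=
  crossingParity_comp_neg p

def IsTop (t : ZMod m) : Prop :=
  ∀ x ∈ Set.range C.s, x.2 < (C.s t).2 ∨ x.2 = (C.s t).2 ∧ x.1 ≤ (C.s t).1

theorem exists_isTop [NeZero m] : ∃ t, C.IsTop t := by
  obtain ⟨t, -, ht⟩ := Finset.exists_max_image Finset.univ (fun i => toLex ((C.s i).2, (C.s i).1))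
    ⟨0, Finset.mem_univ 0⟩
  exact ⟨t, fun _ ⟨i, hi⟩ => hi ▸ Prod.Lex.toLex_le_toLex.1 (ht i (Finset.mem_univ i))⟩

theorem neighbors_of_isTop {t : ZMod m} (ht : C.IsTop t) :
    (C.s (t + 1) = ((C.s t).1 + 1, (C.s t).2 - 1) ∨
      C.s (t - 1) = ((C.s t).1 + 1, (C.s t).2 - 1)) ∧
      C.s (t + 1) ≠ ((C.s t).1, (C.s t).2 - 1) ∧ C.s (t - 1) ≠ ((C.s t).1, (C.s t).2 - 1) := by
  obtain ⟨hne₁, ha₁, hb₁⟩ := C.c2Adj_succ t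
  obtain ⟨hne₂, ha₂, hb₂⟩ := C.c2Adj_succ (t - 1)
  have ht₁ := ht _ ⟨t + 1, rfl⟩
  have ht₂ := ht _ ⟨t - 1, rfl⟩
  have hfar := C.not_near_succ_pred t
  rw [sub_add_cancel] at hne₂ ha₂ hb₂
  simp only [ne_eq, Prod.ext_iff, abs_le, Prod.fst_sub, Prod.snd_sub] at *
  omega

theorem crossingParity_eq_one_of_isTop [NeZero m] {t : ZMod m} (ht : C.IsTop t) :
    ((C.s t).1, (C.s t).2 - 1) ∉ Set.range C.s ∧
      crossingParity C.s ((C.s t).1, (C.s t).2 - 1) = 1 := by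
  -- Reversing the curve swaps `s (t + 1)` and `s (t - 1)`.
  wlog hR : C.s (t + 1) = ((C.s t).1 + 1, (C.s t).2 - 1) generalizing C t
  · have h := this C.reverse (t := -t) (by rwa [IsTop, range_reverse, reverse_s, neg_neg])
      (by simpa only [reverse_s, neg_neg, show -(-t + 1) = t - 1 by ring] using
        (C.neighbors_of_isTop ht).1.resolve_left hR)
    rwa [range_reverse, crossingParity_reverse, reverse_s, neg_neg] at h
  obtain ⟨-, hD₁, hD₂⟩ := C.neighbors_of_isTop ht
  refine ⟨fun hx => ?_, ?_⟩
  · have hadj : c2Adj ((C.s t).1, (C.s t).2 - 1) (C.s t) :=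
      ⟨fun h => by simpa using congrArg Prod.snd h, by simp, by simp⟩
    rcases C.eq_pred_or_eq_succ_of_c2Adj hx hadj with h | h
    · exact hD₂ h.symm
    · exact hD₁ h.symm
  have hcross : ∀ i, Crosses C.s ((C.s t).1, (C.s t).2 - 1) i ↔ i = t := by
    intro i
    constructor
    · rintro ⟨hrow, hsum⟩
      have hi := (C.c2Adj_succ i).2
      have hti := ht _ ⟨i, rfl⟩
      have hti' := ht _ ⟨i + 1, rfl⟩
      simp only [abs_le] at hi
      rcases hrow with ⟨h₁, h₂⟩ | ⟨h₁, h₂⟩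
      · have e₁ := C.injective (Prod.ext (by omega) (by omega) : C.s (i + 1) = C.s t)
        have e₂ := C.injective (hR ▸ Prod.ext (by omega) (by omega) : C.s i = C.s (t + 1))
        have hm := C.four_le
        exact absurd (by linear_combination e₁ - e₂ : (2 : ZMod m) = 0)
          (by exact_mod_cast ZMod.natCast_ne_zero_of_lt (m := m) (a := 2) (by norm_num) (by omega))
      · exact C.injective (Prod.ext (by omega) (by omega))
    · rintro rfl
      simp only [Crosses, hR, and_true]
      omega
  rw [crossingParity, Finset.sum_congr rfl fun i _ => if_congr (hcross i) rfl rfl,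
    Finset.sum_ite_eq' Finset.univ t]
  simp

end SimpleClosedCurve

/-- Jordan Curve Theorem for digital topology: the complement of a c₂-simple closed
curve of at least 4 points has exactly two c₁-components, one finite and one infinite. -/
theorem digital_jordan_curve (S : Set (ℤ × ℤ)) (hS : SCC S) :
    ∃ A B : Set (ℤ × ℤ),
      A ∪ B = Sᶜ ∧ Disjoint A B ∧ A.Nonempty ∧ B.Nonempty ∧
      (∀ a ∈ A, ∀ a' ∈ A, Reach c1Adj Sᶜ a a') ∧
      (∀ b ∈ B, ∀ b' ∈ B, Reach c1Adj Sᶜ b b') ∧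
      (∀ a ∈ A, ∀ b ∈ B, ¬ Reach c1Adj Sᶜ a b) ∧
      A.Finite ∧ B.Infinite := by
  obtain ⟨m, C, rfl⟩ := hS.exists_curve
  have : NeZero m := ⟨by have := C.four_le; omega⟩
  obtain ⟨t, ht⟩ := C.exists_isTop
  obtain ⟨hp₀, hpar⟩ := C.crossingParity_eq_one_of_isTop ht
  obtain ⟨l, hl⟩ := (Set.finite_range C.s).bddBelow
  obtain ⟨u, hu⟩ := (Set.finite_range C.s).bddAbove
  have hbox : ∀ x ∉ Set.Icc l u, crossingParity C.s x = 0 :=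
    fun x => crossingParity_eq_zero_of_notMem_Icc C.c2Adj_succ (fun i => hl ⟨i, rfl⟩)
      (fun i => hu ⟨i, rfl⟩)
  set A := {x | Reach c1Adj (Set.range C.s)ᶜ ((C.s t).1, (C.s t).2 - 1) x}
  have hA : A ⊆ Set.Icc l u := fun x hx => by
    by_contra h
    have := (crossingParity_eq_of_reach C.c2Adj_succ hx).trans (hbox x h)
    rw [hpar] at this
    exact one_ne_zero this
  have hB : (Set.Icc l u)ᶜ ⊆ (Set.range C.s)ᶜ \ A := fun x hx =>
    ⟨fun ⟨i, hi⟩ => hx (hi ▸ ⟨hl ⟨i, rfl⟩, hu ⟨i, rfl⟩⟩), fun hxA => hx (hA hxA)⟩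
  have hBinf := (Set.finite_Icc l u).infinite_compl.mono hB
  exact ⟨A, _ \ A, Set.union_sdiff_cancel fun x hx => hx.mem hp₀, Set.disjoint_sdiff_right,
    ⟨_, Reach.refl⟩, hBinf.nonempty, fun a ha a' ha' => ha.symm.trans ha',
    fun b hb b' hb' => C.reach_of_not_reach hp₀ hb.1 hb'.1 hb.2 hb'.2,
    fun a ha b hb hab => hb.2 (ha.trans hab), (Set.finite_Icc l u).subset hA, hBinf⟩
end

section
/- Let X = [−3,3]_ℤ² \ A where A = {(x,y) ∈ ℤ² : |x|+|y| ≤ 1}. Then (X, c₂) does not have the approximate fixed point property; specifically, with S = {(x,y) : |x|+|y| = 2} and F(x,y) = (−x,−y), the map F ∘ r (where r is a c₂-retraction of X onto S) is c₂-continuous and has no approximate fixed point. -/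
instance : ∀ p q, Decidable (c2Adj p q) := fun p q => by unfold c2Adj; infer_instance

/-- The explicit retraction onto the diamond S. -/
def rr : ℤ × ℤ → ℤ × ℤ := fun p =>
  if 2 * |p.2| < |p.1| then (2 * p.1.sign, 0)
  else if 2 * |p.1| < |p.2| then (0, 2 * p.2.sign)
  else (p.1.sign, p.2.sign)

set_option maxRecDepth 10000 in
lemma master1 : ∀ x ∈ Finset.Icc (-3:ℤ) 3, ∀ y ∈ Finset.Icc (-3:ℤ) 3,
    ¬ |x| + |y| ≤ 1 →
    (|(rr (x,y)).1| + |(rr (x,y)).2| = 2 ∧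
     (|x| + |y| = 2 → rr (x,y) = (x,y)) ∧
     ¬(((-(rr (x,y)).1, -(rr (x,y)).2) : ℤ × ℤ) = (x,y) ∨
        c2Adj (x,y) (-(rr (x,y)).1, -(rr (x,y)).2))) := by decide

set_option maxRecDepth 100000 in
lemma master2 : ∀ x ∈ Finset.Icc (-3:ℤ) 3, ∀ y ∈ Finset.Icc (-3:ℤ) 3,
    ∀ u ∈ Finset.Icc (-3:ℤ) 3, ∀ v ∈ Finset.Icc (-3:ℤ) 3,
    ¬ |x| + |y| ≤ 1 → ¬ |u| + |v| ≤ 1 → c2Adj (x,y) (u,v) →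
    (rr (x,y) = rr (u,v) ∨ c2Adj (rr (x,y)) (rr (u,v))) ∧
    ((( -(rr (x,y)).1, -(rr (x,y)).2) : ℤ × ℤ) = (-(rr (u,v)).1, -(rr (u,v)).2) ∨
      c2Adj (-(rr (x,y)).1, -(rr (x,y)).2) (-(rr (u,v)).1, -(rr (u,v)).2)) := by decide

/-- The image X = [−3,3]_ℤ² \ {(x,y) : |x|+|y| ≤ 1} does not have the AFPP:
with S = {(x,y) : |x|+|y| = 2} and F(x,y) = (−x,−y), there is a c₂-retraction
r : X → S for which F ∘ r is continuous with no approximate fixed point. -/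
theorem example_not_AFPP :
    let X : Set (ℤ × ℤ) :=
      (Set.Icc (-3 : ℤ) 3 ×ˢ Set.Icc (-3 : ℤ) 3) \ {p | |p.1| + |p.2| ≤ 1}
    let S : Set (ℤ × ℤ) := {p | |p.1| + |p.2| = 2}
    let F : ℤ × ℤ → ℤ × ℤ := fun p => (-p.1, -p.2)
    (∃ r : ℤ × ℤ → ℤ × ℤ,
        (∀ p ∈ X, r p ∈ S) ∧ (∀ p ∈ S, r p = p) ∧ DigContOn X r ∧
        DigContOn X (F ∘ r) ∧
        ∀ p ∈ X, ¬(F (r p) = p ∨ c2Adj p (F (r p)))) ∧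
      ¬ AFPPOn X := by
  intro X S F
  have hX : ∀ p : ℤ × ℤ, p ∈ X ↔
      (p.1 ∈ Finset.Icc (-3:ℤ) 3 ∧ p.2 ∈ Finset.Icc (-3:ℤ) 3 ∧ ¬ |p.1| + |p.2| ≤ 1) := by
    intro p
    simp [X, Set.mem_Icc, Finset.mem_Icc, Prod.le_def, and_assoc]
    tauto
  have hS : ∀ p : ℤ × ℤ, p ∈ S ↔ |p.1| + |p.2| = 2 := fun p => Iff.rfl
  have hSX : ∀ p ∈ S, p ∈ X := by
    intro p hp
    rw [hX]
    have h2 : |p.1| + |p.2| = 2 := hp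
    have a1 := abs_nonneg p.1; have a2 := abs_nonneg p.2
    have b1 : |p.1| ≤ 3 := by linarith
    have b2 : |p.2| ≤ 3 := by linarith
    rw [abs_le] at b1 b2
    exact ⟨Finset.mem_Icc.mpr b1, Finset.mem_Icc.mpr b2, by rw [h2]; norm_num⟩
  have hrS : ∀ p ∈ X, rr p ∈ S := by
    intro p hp
    rw [hX] at hp
    obtain ⟨x, y⟩ := p
    exact (master1 x hp.1 y hp.2.1 hp.2.2).1
  have hretr : ∀ p ∈ S, rr p = p := by
    intro p hp
    have hpx := hSX p hp
    rw [hX] at hpx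
    obtain ⟨x, y⟩ := p
    exact (master1 x hpx.1 y hpx.2.1 hpx.2.2).2.1 hp
  have hcont : DigContOn X rr := by
    intro p hp q hq hadj
    rw [hX] at hp hq
    obtain ⟨x, y⟩ := p
    obtain ⟨u, v⟩ := q
    exact (master2 x hp.1 y hp.2.1 u hq.1 v hq.2.1 hp.2.2 hq.2.2 hadj).1
  have hcontF : DigContOn X (F ∘ rr) := by
    intro p hp q hq hadj
    rw [hX] at hp hq
    obtain ⟨x, y⟩ := p
    obtain ⟨u, v⟩ := q
    exact (master2 x hp.1 y hp.2.1 u hq.1 v hq.2.1 hp.2.2 hq.2.2 hadj).2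
  have hnofix : ∀ p ∈ X, ¬(F (rr p) = p ∨ c2Adj p (F (rr p))) := by
    intro p hp
    rw [hX] at hp
    obtain ⟨x, y⟩ := p
    exact (master1 x hp.1 y hp.2.1 hp.2.2).2.2
  have hFS : ∀ q ∈ S, F q ∈ S := by
    intro q hq
    show |(-q.1)| + |(-q.2)| = 2
    rw [abs_neg, abs_neg]
    exact hq
  refine ⟨⟨rr, hrS, hretr, hcont, hcontF, hnofix⟩, ?_⟩
  intro h
  obtain ⟨p, hp, hfix⟩ :=
    h (F ∘ rr) (fun p hp => hSX _ (hFS _ (hrS p hp))) hcontF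
  exact hnofix p hp hfix
end

section
/- For the c₂-simple closed curve S = {(x,y) ∈ ℤ² : |x|+|y| = 2} of 8 points, the antipodal map F(x,y) = (−x,−y) is a (c₂,c₂)-continuous self-map of S, and for every x ∈ S the ℓ∞ distance between x and F(x) is at least 2; hence F has no approximate fixed point and (S, c₂) does not have the AFPP. -/
/-- On the 8-point curve S = {(x,y) : |x|+|y| = 2}, the antipodal map is
(c₂,c₂)-continuous, moves every point ℓ∞ distance at least 2, hence has no
approximate fixed point, and (S,c₂) lacks the AFPP. -/
theorem antipodal_on_diamond :
    let S : Set (ℤ × ℤ) := {p | |p.1| + |p.2| = 2}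
    let F : ℤ × ℤ → ℤ × ℤ := fun p => (-p.1, -p.2)
    (∀ p ∈ S, F p ∈ S) ∧ DigContOn S F ∧
      (∀ p ∈ S, 2 ≤ max |(F p).1 - p.1| |(F p).2 - p.2|) ∧
      (∀ p ∈ S, ¬(F p = p ∨ c2Adj p (F p))) ∧ ¬ AFPPOn S := by
  intro S F
  have hmap : ∀ p ∈ S, F p ∈ S := by
    intro p hp
    simp only [S, Set.mem_setOf_eq, F, abs_neg] at *
    exact hp
  have hcont : DigContOn S F := by
    intro p _ q _ hpq
    right
    obtain ⟨hne, h1, h2⟩ := hpq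
    refine ⟨?_, ?_, ?_⟩
    · intro h'
      simp only [F, Prod.mk.injEq, neg_inj] at h'
      exact hne (Prod.ext h'.1 h'.2)
    · simpa only [F, show -p.1 - -q.1 = -(p.1 - q.1) by ring, abs_neg] using h1
    · simpa only [F, show -p.2 - -q.2 = -(p.2 - q.2) by ring, abs_neg] using h2
  have hdist : ∀ p ∈ S, 2 ≤ max |(F p).1 - p.1| |(F p).2 - p.2| := by
    intro p hp
    simp only [S, Set.mem_setOf_eq] at hp
    simp only [F, le_max_iff,
      show ∀ x : ℤ, -x - x = -(2 * x) from fun x => by ring, abs_neg, abs_mul,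
      show |(2:ℤ)| = 2 from rfl]
    have h1 := abs_nonneg p.1
    have h2 := abs_nonneg p.2
    omega
  have hnofix : ∀ p ∈ S, ¬(F p = p ∨ c2Adj p (F p)) := by
    intro p hp h
    have h2 := hdist p hp
    simp only [S, Set.mem_setOf_eq] at hp
    rcases h with h | ⟨_, h1, h2'⟩
    · have : (-p.1, -p.2) = p := h
      rw [Prod.ext_iff] at this
      obtain ⟨e1, e2⟩ := this
      have e1' : p.1 = 0 := by omega
      have e2' : p.2 = 0 := by omega
      rw [e1', e2'] at hp
      simp at hp
    · simp only [F, show ∀ x : ℤ, x - -x = 2 * x from fun x => by ring,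
        abs_mul, show |(2:ℤ)| = 2 from rfl] at h1 h2'
      omega
  refine ⟨hmap, hcont, hdist, hnofix, ?_⟩
  intro hA
  obtain ⟨p, hp, hfix⟩ := hA F hmap hcont
  exact hnofix p hp hfix
end
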